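/- arXiv:1401.8037 — 6 statements merged into one kernel-verified Lean document; each statement's English description precedes it below -/
import Mathlib

section
/- For every integer N ≥ 2 and every nonzero real number u, the series Σ_{ℓ=1}^{∞} p_ℓ^{(N)} (sech u)^ℓ converges absolutely and equals sech(N u). (This is the analytic core of Klebanov's theorem that the normalized random sum (1/N) Σ_{j=1}^{μ_N} L_j of i.i.d. hyperbolic-secant random variables again has the hyperbolic secant distribution.) -/
/-- The probability numbers `p_ℓ^{(N)}`:  `p_0^{(N)} = 0` and for `ℓ ≥ 1`,
`p_ℓ^{(N)} = (1/N) ∑_{k=1}^{N} (-1)^{k+1} sin θ_k cos^{ℓ-1} θ_k` with `θ_k = (2k-1)π/(2N)`. -/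
noncomputable def probNum (N ℓ : ℕ) : ℝ :=
  if ℓ = 0 then 0 else
    (1 / N) * ∑ k ∈ Finset.range N,
      (-1 : ℝ) ^ k * Real.sin ((2 * k + 1) * Real.pi / (2 * N)) *
        Real.cos ((2 * k + 1) * Real.pi / (2 * N)) ^ (ℓ - 1)

/-!
Expanding `1 / T_N` in partial fractions over its simple roots `cos θ_k`, where
`T_N'(cos θ_k) = N (-1)^k / sin θ_k`, gives
`1 / T_N(x) = (1/N) ∑_k (-1)^k sin θ_k / (x - cos θ_k)`.
For `x = 1/z` with `|z| ≤ 1`, each simple fraction is the geometric series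
`∑_{ℓ ≥ 1} cos^{ℓ-1} θ_k z^ℓ` (here `|cos θ_k| < 1`), so `∑ p_ℓ z^ℓ = 1 / T_N(1/z)`;
at `z = sech u` this is `1 / T_N(cosh u) = sech (N u)`.
-/

open Polynomial Polynomial.Chebyshev Real Finset

theorem Polynomial.inv_eval_eq_sum_roots {F : Type*} [Field F] {P : F[X]}
    (hdeg : 0 < P.natDegree) (hsplit : P.roots.card = P.natDegree) (hnodup : P.roots.Nodup)
    {x : F} (hx : P.eval x ≠ 0) :
    (P.eval x)⁻¹ = (P.roots.map fun r ↦ ((derivative P).eval r * (x - r))⁻¹).sum := by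
  classical
  set s := P.roots.toFinset
  have hsP : s.val = P.roots := by rw [Multiset.toFinset_val, hnodup.dedup]
  have hP : P = C P.leadingCoeff * Lagrange.nodal s id := by
    rw [Lagrange.nodal, Finset.prod_eq_multiset_prod, hsP]
    exact (C_leadingCoeff_mul_prod_multiset_X_sub_C hsplit).symm
  have hs : s.Nonempty := by
    rw [Multiset.toFinset_nonempty, ← Multiset.card_pos, hsplit]
    exact hdeg
  have hxs : ∀ r ∈ s, x ≠ id r := by
    rintro r hr rfl
    exact hx (isRoot_of_mem_roots (Multiset.mem_toFinset.mp hr))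
  -- interpolating the constant `1` at the roots: `1 = nodal x * ∑ r, w r / (x - r)`
  have hlagrange := Lagrange.eval_interpolate_not_at_node 1 hxs
  rw [Lagrange.interpolate_one (Set.injOn_id _) hs, eval_one] at hlagrange
  rw [← hsP, ← Finset.sum_eq_multiset_sum, hP, eval_mul, eval_C, derivative_C_mul]
  simp only [eval_mul, eval_C, mul_inv, mul_assoc, ← Finset.mul_sum]
  congr 1
  rw [inv_eq_of_mul_eq_one_right hlagrange.symm]
  refine Finset.sum_congr rfl fun r hr ↦ ?_
  rw [Lagrange.nodalWeight_eq_eval_derivative_nodal hr, Pi.one_apply, mul_one, id]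

/-- The paper's `θ_{k+1}`: `k` is 0-based, as in `probNum`. -/
noncomputable def chebyshevAngle (n k : ℕ) : ℝ := (2 * k + 1) * π / (2 * n)

theorem chebyshevAngle_mem_Ioo {n k : ℕ} (hk : k < n) : chebyshevAngle n k ∈ Set.Ioo 0 π := by
  have hn : (0 : ℝ) < n := by exact_mod_cast (k.zero_le.trans_lt hk)
  have hkn : (k : ℝ) + 1 ≤ n := by exact_mod_cast hk
  rw [chebyshevAngle, Set.mem_Ioo, div_lt_iff₀ (by positivity)]
  exact ⟨by positivity, by nlinarith [pi_pos]⟩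

theorem abs_cos_chebyshevAngle_lt_one {n k : ℕ} (hk : k < n) :
    |cos (chebyshevAngle n k)| < 1 := by
  obtain ⟨h0, hπ⟩ := chebyshevAngle_mem_Ioo hk
  rw [abs_lt]
  exact ⟨by simpa using cos_lt_cos_of_nonneg_of_le_pi h0.le le_rfl hπ,
    by simpa using cos_lt_cos_of_nonneg_of_le_pi le_rfl hπ.le h0⟩

theorem sin_mul_chebyshevAngle {n : ℕ} (hn : n ≠ 0) (k : ℕ) :
    sin (n * chebyshevAngle n k) = (-1) ^ k := by
  have hangle : (n : ℝ) * chebyshevAngle n k = π / 2 + k * π := by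
    rw [chebyshevAngle]; field_simp; ring
  rw [hangle, sin_add_nat_mul_pi, sin_pi_div_two, mul_one]

namespace Polynomial.Chebyshev

theorem roots_T_real_eq_map (n : ℕ) :
    (T ℝ n).roots = (Multiset.range n).map fun k ↦ cos (chebyshevAngle n k) := by
  rw [roots_T_real,
    image_val_of_injOn ((range n).nodup_map_iff_injOn.mp (roots_T_real_nodup n))]
  rfl

theorem eval_derivative_T_real_cos_chebyshevAngle_mul_sin {n : ℕ} (hn : n ≠ 0) (k : ℕ) :
    (derivative (T ℝ n)).eval (cos (chebyshevAngle n k)) * sin (chebyshevAngle n k) =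
      n * (-1) ^ k := by
  rw [T_derivative_eq_U, eval_mul, eval_intCast, mul_assoc, U_real_cos]
  push_cast
  rw [sub_add_cancel, sin_mul_chebyshevAngle hn]

theorem inv_eval_T_real {n : ℕ} (hn : n ≠ 0) {x : ℝ} (hx : (T ℝ n).eval x ≠ 0) :
    ((T ℝ n).eval x)⁻¹ = (1 / n) * ∑ k ∈ range n,
      (-1) ^ k * sin (chebyshevAngle n k) / (x - cos (chebyshevAngle n k)) := by
  have hroots := roots_T_real_eq_map n
  have hdeg : (T ℝ n).natDegree = n := by rw [natDegree_T, Int.natAbs_natCast]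
  have hsplit : (T ℝ n).roots.card = (T ℝ n).natDegree := by
    rw [hdeg, hroots, Multiset.card_map, Multiset.card_range]
  rw [inv_eval_eq_sum_roots (by omega) hsplit
    (hroots ▸ roots_T_real_nodup n) hx, hroots, Multiset.map_map, mul_sum,
    sum_eq_multiset_sum, range_val]
  congr 1
  refine Multiset.map_congr rfl fun k hk ↦ ?_
  have hsin : sin (chebyshevAngle n k) ≠ 0 :=
    (sin_pos_of_mem_Ioo (chebyshevAngle_mem_Ioo (Multiset.mem_range.mp hk))).ne'
  rw [Function.comp_apply,
    eq_div_of_mul_eq hsin (eval_derivative_T_real_cos_chebyshevAngle_mul_sin hn k)]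
  simp only [mul_inv, div_eq_mul_inv, inv_inv, ← inv_pow, inv_neg_one]
  ring

end Polynomial.Chebyshev

theorem probNum_succ_mul_pow (N ℓ : ℕ) (z : ℝ) :
    probNum N (ℓ + 1) * z ^ (ℓ + 1) = ∑ k ∈ range N,
      1 / N * (-1) ^ k * sin (chebyshevAngle N k) * z * (cos (chebyshevAngle N k) * z) ^ ℓ := by
  rw [probNum, if_neg ℓ.succ_ne_zero, Nat.add_sub_cancel, mul_sum, sum_mul]
  refine Finset.sum_congr rfl fun k _ ↦ ?_
  rw [chebyshevAngle]
  ring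

theorem abs_cos_chebyshevAngle_mul_lt_one {n k : ℕ} (hk : k < n) {z : ℝ} (hz : |z| ≤ 1) :
    |cos (chebyshevAngle n k) * z| < 1 := by
  rw [abs_mul]
  exact mul_lt_one_of_nonneg_of_lt_one_left (abs_nonneg _) (abs_cos_chebyshevAngle_lt_one hk) hz

theorem summable_abs_probNum_mul_pow (N : ℕ) {z : ℝ} (hz : |z| ≤ 1) :
    Summable fun ℓ ↦ |probNum N ℓ * z ^ ℓ| := by
  rw [← summable_nat_add_iff 1]
  simp_rw [probNum_succ_mul_pow]
  refine Summable.of_nonneg_of_le (fun _ ↦ abs_nonneg _) (fun ℓ ↦ abs_sum_le_sum_abs _ _)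
    (summable_sum fun k hk ↦ ?_)
  simp_rw [abs_mul _ (_ ^ _), abs_pow]
  exact (summable_geometric_of_lt_one (abs_nonneg _)
    (abs_cos_chebyshevAngle_mul_lt_one (mem_range.mp hk) hz)).mul_left _

theorem hasSum_probNum_mul_pow {N : ℕ} (hN : N ≠ 0) {z : ℝ} (hz0 : z ≠ 0) (hz : |z| ≤ 1) :
    HasSum (fun ℓ ↦ probNum N ℓ * z ^ ℓ) ((T ℝ N).eval z⁻¹)⁻¹ := by
  have hT : (T ℝ N).eval z⁻¹ ≠ 0 := by
    refine abs_pos.mp (one_pos.trans_le (one_le_abs_eval_T_real _ ?_))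
    rw [abs_inv]
    exact one_le_inv₀ (abs_pos.mpr hz0) |>.mpr hz
  rw [← hasSum_nat_add_iff' 1, sum_range_one, probNum, if_pos rfl, zero_mul, sub_zero]
  simp_rw [probNum_succ_mul_pow, inv_eval_T_real hN hT, mul_sum]
  refine hasSum_sum fun k hk ↦ ?_
  set c := cos (chebyshevAngle N k)
  have hvalue : 1 / N * ((-1) ^ k * sin (chebyshevAngle N k) / (z⁻¹ - c)) =
      1 / N * (-1) ^ k * sin (chebyshevAngle N k) * z * (1 - c * z)⁻¹ := by
    rw [show z⁻¹ - c = (1 - c * z) / z by field_simp]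
    field_simp
  rw [hvalue]
  exact (hasSum_geometric_of_abs_lt_one
    (abs_cos_chebyshevAngle_mul_lt_one (mem_range.mp hk) hz)).mul_left _

theorem klebanov_sech_general (N : ℕ) (hN : 2 ≤ N) (u : ℝ) :
    Summable (fun ℓ : ℕ => |probNum N ℓ * (1 / Real.cosh u) ^ ℓ|) ∧
    ∑' ℓ : ℕ, probNum N ℓ * (1 / Real.cosh u) ^ ℓ = 1 / Real.cosh (N * u) := by
  have hsech : |1 / cosh u| ≤ 1 := by
    rw [abs_of_pos (by positivity)]
    exact div_le_one_of_le₀ (one_le_cosh u) (cosh_pos u).le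
  refine ⟨summable_abs_probNum_mul_pow N hsech, ?_⟩
  rw [(hasSum_probNum_mul_pow (by omega) (by positivity) hsech).tsum_eq, one_div, inv_inv,
    T_real_cosh, Int.cast_natCast, one_div]

/-- For `N ≥ 2` and `u ≠ 0`, the series `∑_{ℓ≥1} p_ℓ^{(N)} (sech u)^ℓ` converges
absolutely and equals `sech (N u)`.  (Since `p_0^{(N)} = 0`, the sum may be taken
over all `ℓ : ℕ`.) -/
theorem klebanov_sech (N : ℕ) (hN : 2 ≤ N) (u : ℝ) (hu : u ≠ 0) :
    Summable (fun ℓ : ℕ => |probNum N ℓ * (1 / Real.cosh u) ^ ℓ|) ∧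
    ∑' ℓ : ℕ, probNum N ℓ * (1 / Real.cosh u) ^ ℓ = 1 / Real.cosh (N * u) :=
  klebanov_sech_general N hN u
end

section
/- Let N ≥ 1 be an integer and set θ_k^{(N)} = (2k−1)π/(2N) for k = 1,…,N. For every complex number z with 0 < |z| < 1, one has T_N(1/z) ≠ 0 and 1/T_N(1/z) = Σ_{ℓ=1}^{∞} [ (1/N) Σ_{k=1}^{N} (−1)^{k+1} sin(θ_k^{(N)}) cos^{ℓ−1}(θ_k^{(N)}) ] z^ℓ, the series converging absolutely. -/
/-!
The roots `c_k = cos θ_k` of `T_N` are simple, so `T_N = 2^(N-1) ∏ (X - c_k)` and partial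
fractions give `1 / T_N(w) = ∑_k 1 / (T_N'(c_k) (w - c_k))`. Since `T_N' = N U_{N-1}` and
`U_{N-1}(cos θ) sin θ = sin (N θ)`, we get `1 / T_N'(c_k) = (-1)^k sin θ_k / N`. For `w = 1/z`
with `|z| < 1`, each `1 / (w - c_k) = ∑_j c_k^j z^(j+1)` is a convergent geometric series, and
summing over `k` gives the expansion; its coefficients are bounded by `1`.
-/

open Polynomial Finset

namespace Lagrange

variable {F ι : Type*} [Field F] [DecidableEq ι] {s : Finset ι} {v : ι → F} {x : F}

theorem inv_eval_nodal_eq_sum (hvs : Set.InjOn v s) (hs : s.Nonempty)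
    (hx : ∀ i ∈ s, x ≠ v i) :
    (eval x (nodal s v))⁻¹ = ∑ i ∈ s, nodalWeight s v i * (x - v i)⁻¹ :=
  inv_eq_of_mul_eq_one_right <| by
    simpa only [Pi.one_apply, interpolate_one hvs hs, eval_one, mul_one] using
      (eval_interpolate_not_at_node 1 hx).symm

theorem inv_eval_eq_sum_inv_eval_derivative_mul {p : F[X]} {a : F} (hp : p = C a * nodal s v)
    (hvs : Set.InjOn v s) (hs : s.Nonempty) (hx : ∀ i ∈ s, x ≠ v i) :
    (eval x p)⁻¹ = ∑ i ∈ s, (eval (v i) (derivative p))⁻¹ * (x - v i)⁻¹ := by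
  subst hp
  simp only [eval_mul, eval_C, derivative_C_mul, mul_inv, inv_eval_nodal_eq_sum hvs hs hx, mul_sum]
  refine sum_congr rfl fun i hi => ?_
  rw [nodalWeight_eq_eval_derivative_nodal hi, mul_assoc]

end Lagrange

theorem hasSum_pow_mul_pow_succ {K : Type*} [NormedField K] {c z : K}
    (hz : z ≠ 0) (h : ‖c * z‖ < 1) :
    HasSum (fun j : ℕ => c ^ j * z ^ (j + 1)) (z⁻¹ - c)⁻¹ := by
  have hsub : z⁻¹ - c = (1 - c * z) * z⁻¹ := by
    rw [sub_mul, one_mul, mul_assoc, mul_inv_cancel₀ hz, mul_one]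
  rw [hsub, mul_inv, inv_inv, mul_comm,
    show (fun j : ℕ => c ^ j * z ^ (j + 1)) = fun j => z * (c * z) ^ j by ext j; ring]
  exact (hasSum_geometric_of_norm_lt_one h).mul_left z

namespace Polynomial.Chebyshev

open Real

/-- The paper's `θ_{k+1}^{(N)}`: the roots of `T_N` are `cos (rootAngle N k)` for `k < N`. -/
noncomputable def rootAngle (N k : ℕ) : ℝ := (2 * k + 1) * π / (2 * N)

theorem sin_nat_mul_rootAngle {N k : ℕ} (hk : k < N) : sin (N * rootAngle N k) = (-1) ^ k := by
  have hN : (N : ℝ) ≠ 0 := by exact_mod_cast (by omega : N ≠ 0)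
  rw [show N * rootAngle N k = k * π + π / 2 by rw [rootAngle]; field_simp,
    sin_add_pi_div_two, cos_nat_mul_pi]

theorem injOn_cos_rootAngle (N : ℕ) : Set.InjOn (fun k => cos (rootAngle N k)) (range N) :=
  (range N).nodup_map_iff_injOn.mp (roots_T_real_nodup N)

theorem T_real_eq_C_mul_nodal (N : ℕ) :
    T ℝ N = Polynomial.C (2 ^ (N - 1)) *
      Lagrange.nodal (range N) (fun k => cos (rootAngle N k)) := by
  have hroots : (T ℝ N).roots = (range N).val.map (fun k => cos (rootAngle N k)) := by
    rw [roots_T_real]; exact image_val_of_injOn (injOn_cos_rootAngle N)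
  have hsplit : Multiset.card (T ℝ N).roots = (T ℝ N).natDegree := by rw [hroots]; simp
  conv_lhs => rw [← C_leadingCoeff_mul_prod_multiset_X_sub_C hsplit]
  rw [leadingCoeff_T, Int.natAbs_natCast, hroots, Multiset.map_map]
  rfl

theorem T_complex_eq_C_mul_nodal (N : ℕ) :
    T ℂ N = Polynomial.C (2 ^ (N - 1)) *
      Lagrange.nodal (range N) (fun k => (cos (rootAngle N k) : ℂ)) := by
  rw [← map_T Complex.ofRealHom, T_real_eq_C_mul_nodal]
  simp [Lagrange.nodal, Polynomial.map_prod]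

theorem eval_derivative_T_real_mul_sin {N k : ℕ} (hk : k < N) :
    (derivative (T ℝ N)).eval (cos (rootAngle N k)) * sin (rootAngle N k) = N * (-1) ^ k := by
  rw [T_derivative_eq_U, eval_mul, mul_assoc, U_real_cos]
  push_cast
  rw [sub_add_cancel, sin_nat_mul_rootAngle hk]
  simp

theorem inv_eval_derivative_T_real {N k : ℕ} (hk : k < N) :
    ((derivative (T ℝ N)).eval (cos (rootAngle N k)))⁻¹ =
      (-1) ^ k * sin (rootAngle N k) / N := by
  have hN : (N : ℝ) ≠ 0 := by exact_mod_cast (by omega : N ≠ 0)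
  have h := eval_derivative_T_real_mul_sin hk
  have hD : (derivative (T ℝ N)).eval (cos (rootAngle N k)) ≠ 0 := by
    rintro h0; simp [h0, hN] at h
  have hsq : ((-1 : ℝ) ^ k) ^ 2 = 1 := by rw [← pow_mul, mul_comm, pow_mul, neg_one_sq, one_pow]
  field_simp
  linear_combination -(-1) ^ k * h - N * hsq

theorem inv_eval_derivative_T_complex {N k : ℕ} (hk : k < N) :
    ((derivative (T ℂ N)).eval (cos (rootAngle N k) : ℂ))⁻¹ =
      (((-1) ^ k * sin (rootAngle N k) / N : ℝ) : ℂ) := by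
  rw [← inv_eval_derivative_T_real hk, ← map_T Complex.ofRealHom, derivative_map,
    Complex.ofReal_inv]
  exact congrArg Inv.inv (eval_map_apply Complex.ofRealHom (cos (rootAngle N k)))

theorem ne_ofReal_cos_of_one_lt_norm {w : ℂ} (hw : 1 < ‖w‖) (x : ℝ) : w ≠ cos x := by
  rintro rfl
  rw [Complex.norm_real, norm_eq_abs] at hw
  exact (abs_cos_le_one x).not_gt hw

theorem eval_T_complex_ne_zero (N : ℕ) {w : ℂ} (hw : 1 < ‖w‖) : (T ℂ N).eval w ≠ 0 := by
  rw [T_complex_eq_C_mul_nodal, eval_mul, eval_C]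
  exact mul_ne_zero (pow_ne_zero _ two_ne_zero)
    (Lagrange.eval_nodal_not_at_node fun k _ => ne_ofReal_cos_of_one_lt_norm hw _)

theorem inv_eval_T_complex_eq_sum {N : ℕ} (hN : N ≠ 0) {w : ℂ} (hw : 1 < ‖w‖) :
    ((T ℂ N).eval w)⁻¹ = ∑ k ∈ range N,
      (((-1) ^ k * sin (rootAngle N k) / N : ℝ) : ℂ) * (w - cos (rootAngle N k))⁻¹ := by
  have hinj : Set.InjOn (fun k => (cos (rootAngle N k) : ℂ)) (range N) :=
    Complex.ofReal_injective.comp_injOn (injOn_cos_rootAngle N)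
  rw [Lagrange.inv_eval_eq_sum_inv_eval_derivative_mul (T_complex_eq_C_mul_nodal N) hinj
    (nonempty_range_iff.mpr hN) fun k _ => ne_ofReal_cos_of_one_lt_norm hw _]
  exact sum_congr rfl fun k hk => by rw [inv_eval_derivative_T_complex (mem_range.mp hk)]

/-- The coefficient of `z ^ (j + 1)` in `1 / T_N(1/z)`; the paper's index `ℓ` is `j + 1`. -/
noncomputable def invTCoeff (N j : ℕ) : ℝ :=
  1 / N * ∑ k ∈ range N, (-1) ^ k * sin (rootAngle N k) * cos (rootAngle N k) ^ j

theorem abs_invTCoeff_le_one (N j : ℕ) : |invTCoeff N j| ≤ 1 := by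
  rcases Nat.eq_zero_or_pos N with rfl | hN
  · simp [invTCoeff]
  have hN' : (0 : ℝ) < N := by exact_mod_cast hN
  rw [invTCoeff, abs_mul, abs_of_pos (by positivity), one_div, inv_mul_le_iff₀ hN', mul_one]
  calc _ ≤ ∑ k ∈ range N, |(-1) ^ k * sin (rootAngle N k) * cos (rootAngle N k) ^ j| :=
        abs_sum_le_sum_abs _ _
    _ ≤ ∑ k ∈ range N, (1 : ℝ) := sum_le_sum fun k _ => by
        simp only [abs_mul, abs_pow, abs_neg, abs_one, one_pow, one_mul]
        exact mul_le_one₀ (abs_sin_le_one _) (by positivity)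
          (pow_le_one₀ (abs_nonneg _) (abs_cos_le_one _))
    _ = N := by simp

theorem summable_norm_invTCoeff_mul_pow (N : ℕ) {z : ℂ} (hz : ‖z‖ < 1) :
    Summable fun j => ‖(invTCoeff N j : ℂ) * z ^ (j + 1)‖ := by
  refine .of_nonneg_of_le (fun _ => norm_nonneg _) (fun j => ?_)
    ((summable_geometric_of_lt_one (norm_nonneg z) hz).mul_left ‖z‖)
  rw [norm_mul, norm_pow, Complex.norm_real, norm_eq_abs, pow_succ']
  exact mul_le_of_le_one_left (by positivity) (abs_invTCoeff_le_one N j)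

theorem hasSum_invTCoeff_mul_pow {N : ℕ} (hN : N ≠ 0) {z : ℂ} (hz0 : z ≠ 0)
    (hz1 : ‖z‖ < 1) :
    HasSum (fun j => (invTCoeff N j : ℂ) * z ^ (j + 1)) ((T ℂ N).eval z⁻¹)⁻¹ := by
  have hw : 1 < ‖z⁻¹‖ := by
    rw [norm_inv]; exact (one_lt_inv₀ (norm_pos_iff.mpr hz0)).mpr hz1
  have hcz (x : ℝ) : ‖(cos x : ℂ) * z‖ < 1 := by
    rw [norm_mul, Complex.norm_real, norm_eq_abs]
    exact (mul_le_of_le_one_left (norm_nonneg z) (abs_cos_le_one x)).trans_lt hz1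
  rw [inv_eval_T_complex_eq_sum hN hw]
  have hcoeff (j : ℕ) : (invTCoeff N j : ℂ) * z ^ (j + 1) =
      ∑ k ∈ range N, (((-1) ^ k * sin (rootAngle N k) / N : ℝ) : ℂ) *
        ((cos (rootAngle N k) : ℂ) ^ j * z ^ (j + 1)) := by
    push_cast [invTCoeff, mul_sum, sum_mul]
    exact sum_congr rfl fun k _ => by ring
  simp only [hcoeff]
  exact hasSum_sum fun k _ => (hasSum_pow_mul_pow_succ hz0 (hcz (rootAngle N k))).mul_left _

end Polynomial.Chebyshev

open Polynomial Chebyshev in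
/-- For `0 < |z| < 1`, `T_N(1/z) ≠ 0` and
`1/T_N(1/z) = ∑_{ℓ=1}^∞ [(1/N) ∑_{k=1}^N (-1)^{k+1} sin θ_k cos^{ℓ-1} θ_k] z^ℓ`,
the series converging absolutely (indexed here by `ℓ = j + 1`, `j : ℕ`). -/
theorem one_div_chebyshevT_eq_tsum (N : ℕ) (hN : 1 ≤ N) (z : ℂ)
    (hz0 : 0 < ‖z‖) (hz1 : ‖z‖ < 1) :
    (Polynomial.Chebyshev.T ℂ N).eval (1 / z) ≠ 0 ∧
    Summable (fun j : ℕ =>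
      ‖((((1 : ℝ) / N) * ∑ k ∈ Finset.range N,
          (-1 : ℝ) ^ k * Real.sin ((2 * k + 1) * Real.pi / (2 * N)) *
            Real.cos ((2 * k + 1) * Real.pi / (2 * N)) ^ j : ℝ) : ℂ) * z ^ (j + 1)‖) ∧
    1 / (Polynomial.Chebyshev.T ℂ N).eval (1 / z) =
      ∑' j : ℕ,
        ((((1 : ℝ) / N) * ∑ k ∈ Finset.range N,
          (-1 : ℝ) ^ k * Real.sin ((2 * k + 1) * Real.pi / (2 * N)) *
            Real.cos ((2 * k + 1) * Real.pi / (2 * N)) ^ j : ℝ) : ℂ) * z ^ (j + 1) := by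
  have hz : z ≠ 0 := norm_pos_iff.mp hz0
  have hw : 1 < ‖1 / z‖ := by rwa [norm_div, norm_one, one_lt_div hz0]
  refine ⟨eval_T_complex_ne_zero N hw, summable_norm_invTCoeff_mul_pow N hz1, ?_⟩
  rw [one_div, one_div]
  exact (hasSum_invTCoeff_mul_pow (by omega) hz hz1).tsum_eq.symm
end

section
/- For every integer N ≥ 2 and every integer ℓ with 1 ≤ ℓ < N, the probability number p_ℓ^{(N)} vanishes; equivalently, Σ_{k=1}^{N} (−1)^{k+1} sin(θ_k^{(N)}) cos^{ℓ−1}(θ_k^{(N)}) = 0 for 1 ≤ ℓ < N. -/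
/-!
Write `θ_k = (2k+1)π/(2N)`. The alternating sum `∑ₖ (-1)^k sin(a θ_k)` vanishes for every integer
`|a| < N`: multiplied by `2 cos(aπ/(2N)) ≠ 0` it telescopes to `± sin(aπ) = 0`. Since
`sin(aθ) cos θ = (sin((a+1)θ) + sin((a-1)θ)) / 2`, each factor `cos θ_k` trades for a shift of `a`
by one, so `∑ₖ (-1)^k sin(a θ_k) cos^m θ_k = 0` whenever `|a| + m < N`; take `a = 1`, `m = ℓ - 1`.
-/

open Finset Real

theorem two_mul_cos_mul_sum_neg_one_pow_mul_sin (φ : ℝ) (N : ℕ) :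
    2 * cos φ * ∑ k ∈ range N, (-1 : ℝ) ^ k * sin ((2 * k + 1) * φ) =
      -(-1) ^ N * sin (2 * N * φ) := by
  let f : ℕ → ℝ := fun k => (-1 : ℝ) ^ k * sin (2 * k * φ)
  have hstep : ∀ k : ℕ, 2 * cos φ * ((-1 : ℝ) ^ k * sin ((2 * k + 1) * φ)) = f k - f (k + 1) := by
    intro k
    have h := two_mul_sin_mul_cos ((2 * k + 1) * φ) φ
    rw [show (2 * k + 1) * φ - φ = 2 * k * φ by ring,
      show (2 * k + 1) * φ + φ = 2 * (k + 1) * φ by ring] at h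
    simp only [f, pow_succ]
    push_cast
    linear_combination (-1 : ℝ) ^ k * h
  rw [mul_sum, sum_congr rfl fun k _ => hstep k, sum_range_sub']
  simp [f]

/-- Indexed from `k = 0`: `chebAngle N k` is the paper's `θ_{k+1}^{(N)}`. -/
noncomputable def chebAngle (N k : ℕ) : ℝ := (2 * k + 1) * π / (2 * N)

theorem sum_neg_one_pow_mul_sin_int_mul_chebAngle {N : ℕ} {a : ℤ} (ha : |a| < N) :
    ∑ k ∈ range N, (-1 : ℝ) ^ k * sin (a * chebAngle N k) = 0 := by
  have hN : (0 : ℝ) < N := by exact_mod_cast (abs_nonneg a).trans_lt ha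
  set φ : ℝ := a * π / (2 * N)
  have hangle : ∀ k : ℕ, (a : ℝ) * chebAngle N k = (2 * k + 1) * φ := fun k => by
    simp only [chebAngle, φ]; ring
  have hφ : |φ| < π / 2 := by
    have ha' : |(a : ℝ)| < N := by exact_mod_cast ha
    rw [abs_div, abs_mul, abs_of_pos pi_pos, abs_of_pos (by positivity : (0 : ℝ) < 2 * N),
      div_lt_div_iff₀ (by positivity) two_pos]
    nlinarith [pi_pos]
  have hcos : 0 < cos φ := cos_pos_of_mem_Ioo ⟨by linarith [neg_abs_le φ], (abs_lt.mp hφ).2⟩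
  have hend : sin (2 * N * φ) = 0 := by
    rw [show 2 * (N : ℝ) * φ = a * π by simp only [φ]; field_simp]
    exact sin_int_mul_pi a
  have htel := two_mul_cos_mul_sum_neg_one_pow_mul_sin φ N
  rw [hend, mul_zero, mul_eq_zero] at htel
  simp only [hangle]
  exact htel.resolve_left (by positivity)

theorem sum_neg_one_pow_mul_sin_int_mul_chebAngle_mul_cos_pow {N : ℕ} (m : ℕ) :
    ∀ {a : ℤ}, |a| + m < N →
      ∑ k ∈ range N, (-1 : ℝ) ^ k * sin (a * chebAngle N k) * cos (chebAngle N k) ^ m = 0 := by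
  induction m with
  | zero =>
    intro a ha
    simpa using sum_neg_one_pow_mul_sin_int_mul_chebAngle (by simpa using ha)
  | succ m ih =>
    intro a ha
    push_cast at ha
    have hsucc : |a + 1| + m < N := by linarith [abs_add_le a 1, abs_one (α := ℤ)]
    have hpred : |a - 1| + m < N := by linarith [abs_sub a 1, abs_one (α := ℤ)]
    have hsplit : ∀ s θ : ℝ, s * sin (a * θ) * cos θ ^ (m + 1) =
        (s * sin (((a + 1 : ℤ) : ℝ) * θ) * cos θ ^ m +
          s * sin (((a - 1 : ℤ) : ℝ) * θ) * cos θ ^ m) / 2 := by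
      intro s θ
      have h := two_mul_sin_mul_cos (a * θ) θ
      rw [show (a : ℝ) * θ - θ = (a - 1) * θ by ring, show (a : ℝ) * θ + θ = (a + 1) * θ by ring] at h
      push_cast
      linear_combination s * cos θ ^ m * h / 2
    simp only [hsplit, ← sum_div, sum_add_distrib, ih hsucc, ih hpred]
    norm_num

theorem probNum_eq_zero_of_lt_general (N ℓ : ℕ) (h1 : 1 ≤ ℓ) (h2 : ℓ < N) :
    probNum N ℓ = 0 ∧
    ∑ k ∈ Finset.range N,
      (-1 : ℝ) ^ k * Real.sin ((2 * k + 1) * Real.pi / (2 * N)) *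
        Real.cos ((2 * k + 1) * Real.pi / (2 * N)) ^ (ℓ - 1) = 0 := by
  have hsum : ∑ k ∈ range N,
      (-1 : ℝ) ^ k * sin (chebAngle N k) * cos (chebAngle N k) ^ (ℓ - 1) = 0 := by
    simpa using sum_neg_one_pow_mul_sin_int_mul_chebAngle_mul_cos_pow (a := 1) (ℓ - 1)
      (by push_cast [abs_one]; omega)
  refine ⟨?_, hsum⟩
  rw [probNum, if_neg (by omega)]
  exact mul_eq_zero_of_right _ hsum

/-- For `2 ≤ N` and `1 ≤ ℓ < N`, the probability number `p_ℓ^{(N)}` vanishes;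
equivalently, `∑_{k=1}^N (-1)^{k+1} sin θ_k cos^{ℓ-1} θ_k = 0`. -/
theorem probNum_eq_zero_of_lt (N ℓ : ℕ) (hN : 2 ≤ N) (h1 : 1 ≤ ℓ) (h2 : ℓ < N) :
    probNum N ℓ = 0 ∧
    ∑ k ∈ Finset.range N,
      (-1 : ℝ) ^ k * Real.sin ((2 * k + 1) * Real.pi / (2 * N)) *
        Real.cos ((2 * k + 1) * Real.pi / (2 * N)) ^ (ℓ - 1) = 0 :=
  probNum_eq_zero_of_lt_general N ℓ h1 h2
end

section
/- Let N ≥ 2 and let ℓ = (2k+1)N for a natural number k ≥ 0. Then 2^{ℓ} · p_ℓ^{(N)} = Σ_{s=1}^{2k} (−1)^{k−s} · A(ℓ−1, sN) + 2·(−1)^k. -/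
/-- Catalan-triangle coefficients `A(n,k) = C(n,k) - C(n,k-1)`,
with the convention `C(n,j) = 0` for `j < 0` (or `j > n`). -/
def catA (n : ℕ) (k : ℤ) : ℤ :=
  (if 0 ≤ k then (n.choose k.toNat : ℤ) else 0) -
    (if 0 ≤ k - 1 then (n.choose (k - 1).toNat : ℤ) else 0)


open Finset Real

theorem sum_range_mul_add_one_eq_sum_multiples {M : Type*} [AddCommMonoid M] {N : ℕ} (hN : N ≠ 0)
    (c : ℕ) (f : ℕ → M) (hf : ∀ j, ¬ N ∣ j → f j = 0) :
    ∑ j ∈ range (c * N + 1), f j = ∑ s ∈ range (c + 1), f (s * N) := by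
  have hinj : Set.InjOn (· * N) (range (c + 1) : Set ℕ) :=
    fun a _ b _ h => Nat.eq_of_mul_eq_mul_right (Nat.pos_of_ne_zero hN) h
  rw [← sum_image hinj]
  refine (sum_subset (fun j hj => ?_) fun j hj hnot => hf j fun ⟨s, hs⟩ => hnot ?_).symm
  · obtain ⟨s, hs, rfl⟩ := mem_image.mp hj
    have := Nat.mul_le_mul_right N (Nat.lt_succ_iff.mp (mem_range.mp hs))
    exact mem_range.mpr (by omega)
  · have hsc : N * s ≤ N * c := by
      have := Nat.lt_succ_iff.mp (mem_range.mp hj)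
      rw [hs] at this
      linarith
    exact mem_image.mpr ⟨s, mem_range.mpr (Nat.lt_succ_of_le
      (Nat.le_of_mul_le_mul_left hsc (Nat.pos_of_ne_zero hN))), by rw [hs, mul_comm]⟩

theorem sum_range_add_two_eq {M : Type*} [AddCommMonoid M] (f : ℕ → M) (c : ℕ) :
    ∑ s ∈ range (c + 2), f s = f 0 + ∑ s ∈ Icc 1 c, f s + f (c + 1) := by
  rw [sum_range_succ, sum_range_succ', ← Ico_add_one_right_eq_Icc, sum_Ico_eq_sum_range]
  simp only [add_tsub_cancel_right, add_comm 1]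
  abel

namespace catA

theorem of_neg (n : ℕ) {j : ℤ} (hj : j < 0) : catA n j = 0 := by
  rw [catA, if_neg hj.not_ge, if_neg (by omega), sub_zero]

@[simp] theorem zero_right (n : ℕ) : catA n 0 = 1 := by simp [catA]

theorem natCast_succ (n m : ℕ) : catA n ((m + 1 : ℕ) : ℤ) = n.choose (m + 1) - n.choose m := by
  rw [catA, if_pos (by omega), if_pos (by omega), Int.toNat_natCast,
    show ((m + 1 : ℕ) : ℤ) - 1 = m by push_cast; ring, Int.toNat_natCast]

theorem eq_zero_of_add_two_le {n m : ℕ} (h : n + 2 ≤ m) : catA n m = 0 := by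
  obtain ⟨m, rfl⟩ : ∃ m', m = m' + 1 := ⟨m - 1, by omega⟩
  rw [natCast_succ, Nat.choose_eq_zero_of_lt (by omega), Nat.choose_eq_zero_of_lt (by omega)]
  rfl

theorem natCast_add_one_self (n : ℕ) : catA n ((n : ℤ) + 1) = -1 := by
  rw [← Nat.cast_succ, natCast_succ, Nat.choose_eq_zero_of_lt (by omega), Nat.choose_self]
  rfl

theorem succ_left (n : ℕ) (j : ℤ) : catA (n + 1) j = catA n j + catA n (j - 1) := by
  rcases lt_or_ge j 0 with hj | hj
  · rw [of_neg _ hj, of_neg _ hj, of_neg _ (by omega)]; rfl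
  lift j to ℕ using hj
  rcases j with _ | _ | m
  · simp [of_neg n (show (-1 : ℤ) < 0 by norm_num)]
  · simp [catA]
  · rw [show ((m + 2 : ℕ) : ℤ) - 1 = ((m + 1 : ℕ) : ℤ) by push_cast; ring, natCast_succ,
      natCast_succ, natCast_succ, Nat.choose_succ_succ' n (m + 1), Nat.choose_succ_succ' n m]
    push_cast; ring

end catA

theorem two_pow_succ_mul_sin_mul_cos_pow (n : ℕ) (θ : ℝ) :
    2 ^ (n + 1) * (sin θ * cos θ ^ n) =
      ∑ j ∈ range (n + 2), (catA n j : ℝ) * sin (((n + 1 - 2 * j : ℤ) : ℝ) * θ) := by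
  induction n with
  | zero => norm_num [sum_range_succ, catA]; ring
  | succ n ih =>
    have hplus : ∑ j ∈ range (n + 3), (catA n j : ℝ) * sin (((n + 2 - 2 * j : ℤ) : ℝ) * θ) =
        ∑ j ∈ range (n + 2), (catA n j : ℝ) * sin (((n + 1 - 2 * j : ℤ) : ℝ) * θ + θ) := by
      rw [sum_range_succ, catA.eq_zero_of_add_two_le le_rfl]
      simp only [Int.cast_zero, zero_mul, add_zero]
      refine sum_congr rfl fun j _ => ?_
      push_cast; ring_nf
    have hminus : ∑ j ∈ range (n + 3), (catA n (j - 1) : ℝ) * sin (((n + 2 - 2 * j : ℤ) : ℝ) * θ) =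
        ∑ j ∈ range (n + 2), (catA n j : ℝ) * sin (((n + 1 - 2 * j : ℤ) : ℝ) * θ - θ) := by
      rw [sum_range_succ', Nat.cast_zero, catA.of_neg n (by norm_num : (0 : ℤ) - 1 < 0)]
      simp only [Int.cast_zero, zero_mul, add_zero]
      refine sum_congr rfl fun j _ => ?_
      push_cast; ring_nf
    calc 2 ^ (n + 1 + 1) * (sin θ * cos θ ^ (n + 1))
        = 2 * cos θ * (2 ^ (n + 1) * (sin θ * cos θ ^ n)) := by ring
      _ = ∑ j ∈ range (n + 2), (catA n j : ℝ) *
            (sin (((n + 1 - 2 * j : ℤ) : ℝ) * θ + θ) + sin (((n + 1 - 2 * j : ℤ) : ℝ) * θ - θ)) := by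
        rw [ih, mul_sum]
        refine sum_congr rfl fun j _ => ?_
        linear_combination (catA n j : ℝ) * two_mul_sin_mul_cos (((n + 1 - 2 * j : ℤ) : ℝ) * θ) θ
      _ = ∑ j ∈ range (n + 3), (catA n j : ℝ) * sin (((n + 2 - 2 * j : ℤ) : ℝ) * θ) +
            ∑ j ∈ range (n + 3), (catA n (j - 1) : ℝ) * sin (((n + 2 - 2 * j : ℤ) : ℝ) * θ) := by
        rw [hplus, hminus, ← sum_add_distrib]
        simp only [mul_add]
      _ = _ := by
        rw [← sum_add_distrib]
        refine sum_congr rfl fun j _ => ?_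
        rw [catA.succ_left]
        push_cast; ring_nf

section

open Complex

theorem sum_neg_one_pow_mul_sin_odd_mul (N : ℕ) (a : ℝ) :
    ∑ r ∈ range N, (-1) ^ r * Real.sin ((2 * r + 1) * a) =
      (cexp (a * I) * ∑ r ∈ range N, (-cexp (↑(2 * a) * I)) ^ r).im := by
  rw [mul_sum, im_sum]
  refine sum_congr rfl fun r _ => ?_
  have hterm : cexp (a * I) * (-cexp (↑(2 * a) * I)) ^ r =
      ((-1) ^ r : ℝ) * cexp (↑((2 * r + 1) * a) * I) := by
    rw [neg_pow, ← Complex.exp_nat_mul, mul_left_comm, ← Complex.exp_add]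
    push_cast; ring_nf
  rw [hterm, im_ofReal_mul, exp_ofReal_mul_I_im]

noncomputable def altSinSum (N : ℕ) (m : ℤ) : ℝ :=
  ∑ r ∈ range N, (-1) ^ r * Real.sin (m * ((2 * r + 1) * π / (2 * N)))

theorem altSinSum_eq_im (N : ℕ) (m : ℤ) :
    altSinSum N m = (cexp (↑(m * π / (2 * N)) * I) *
      ∑ r ∈ range N, (-cexp (↑(2 * (m * π / (2 * N))) * I)) ^ r).im := by
  rw [← sum_neg_one_pow_mul_sin_odd_mul]
  refine sum_congr rfl fun r _ => ?_
  ring_nf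

theorem altSinSum_odd_mul {N : ℕ} (hN : N ≠ 0) (t : ℤ) :
    altSinSum N ((2 * t + 1) * N) = N * (-1) ^ t := by
  have ha : ((2 * t + 1) * N : ℤ) * π / (2 * N) = π / 2 + t * π := by
    push_cast; field_simp; ring
  have hw : -cexp (↑(2 * (π / 2 + t * π)) * I) = 1 := by
    rw [show (↑(2 * (π / 2 + t * π)) * I : ℂ) = π * I + t * (2 * π * I) by push_cast; ring,
      Complex.exp_add, exp_pi_mul_I, exp_int_mul_two_pi_mul_I]
    ring
  rw [altSinSum_eq_im, ha, hw]
  simp only [one_pow, sum_const, card_range, nsmul_eq_mul, mul_one]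
  rw [mul_comm, ← ofReal_natCast, im_ofReal_mul, exp_ofReal_mul_I_im,
    sin_add_int_mul_pi, Real.sin_pi_div_two, mul_one]

/-- Writing `m ≡ N (mod 2)` as `m = 2q - N` makes the ratio `w = e^{2πiq/N}`. -/
theorem altSinSum_two_mul_sub_eq_zero {N : ℕ} {q : ℤ} (hq : ¬ (N : ℤ) ∣ q) :
    altSinSum N (2 * q - N) = 0 := by
  rcases eq_or_ne N 0 with rfl | hN
  · simp [altSinSum]
  set w := -cexp (↑(2 * ((2 * q - N : ℤ) * π / (2 * N))) * I) with hw_def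
  have hw : w = cexp (q / N * (2 * π * I)) := by
    rw [hw_def, ← neg_one_mul, ← exp_pi_mul_I, ← Complex.exp_add]
    congr 1
    push_cast; field_simp; ring
  have hwN : w ^ N = 1 := by
    rw [hw, ← Complex.exp_nat_mul, ← mul_assoc, mul_div_cancel₀ _ (by exact_mod_cast hN)]
    exact exp_int_mul_two_pi_mul_I q
  have hw1 : w ≠ 1 := by
    rw [hw, Ne, Complex.exp_eq_one_iff]
    rintro ⟨n, hn⟩
    have hqn : (q : ℂ) = n * N := by
      rw [mul_left_inj' (by simp [pi_ne_zero, I_ne_zero])] at hn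
      field_simp at hn; linear_combination hn
    exact hq ⟨n, by rw [mul_comm]; exact_mod_cast hqn⟩
  rw [altSinSum_eq_im, geom_sum_eq hw1, hwN]
  simp

end

theorem two_pow_succ_mul_probNum_succ (N n : ℕ) :
    2 ^ (n + 1) * probNum N (n + 1) =
      1 / N * ∑ j ∈ range (n + 2), (catA n j : ℝ) * altSinSum N (n + 1 - 2 * j) := by
  rw [probNum, if_neg n.succ_ne_zero, Nat.add_sub_cancel, mul_left_comm, mul_sum]
  congr 1
  calc ∑ r ∈ range N, 2 ^ (n + 1) * ((-1) ^ r * Real.sin ((2 * r + 1) * π / (2 * N)) *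
          Real.cos ((2 * r + 1) * π / (2 * N)) ^ n)
      = ∑ r ∈ range N, ∑ j ∈ range (n + 2), (-1) ^ r * ((catA n j : ℝ) *
          Real.sin (((n + 1 - 2 * j : ℤ) : ℝ) * ((2 * r + 1) * π / (2 * N)))) := by
        refine sum_congr rfl fun r _ => ?_
        rw [← mul_sum, ← two_pow_succ_mul_sin_mul_cos_pow]
        ring
    _ = _ := by
        rw [sum_comm]
        refine sum_congr rfl fun j _ => ?_
        rw [altSinSum, mul_sum]
        refine sum_congr rfl fun r _ => ?_
        ring

theorem two_pow_succ_mul_probNum_succ_eq_sum_multiples {N k n : ℕ} (hN : N ≠ 0)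
    (hn : (2 * k + 1) * N = n + 1) :
    2 ^ (n + 1) * probNum N (n + 1) =
      ∑ s ∈ range (2 * k + 2), (-1) ^ ((k : ℤ) - s) * (catA n (s * N) : ℝ) := by
  have hnZ : (n : ℤ) + 1 = (2 * k + 1) * N := by exact_mod_cast hn.symm
  have hvanish : ∀ j, ¬ N ∣ j → (catA n j : ℝ) * altSinSum N (n + 1 - 2 * j) = 0 := by
    intro j hj
    have hq : ¬ (N : ℤ) ∣ (k + 1) * N - j := by
      rwa [dvd_sub_right (dvd_mul_left _ _), Int.natCast_dvd_natCast]
    rw [show (n : ℤ) + 1 - 2 * j = 2 * ((k + 1) * N - j) - N by rw [hnZ]; ring,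
      altSinSum_two_mul_sub_eq_zero hq, mul_zero]
  have hmultiple : ∀ s : ℕ, altSinSum N (n + 1 - 2 * (s * N : ℕ)) = N * (-1) ^ ((k : ℤ) - s) := by
    intro s
    rw [show (n : ℤ) + 1 - 2 * (s * N : ℕ) = (2 * ((k : ℤ) - s) + 1) * N by
      push_cast; rw [hnZ]; ring, altSinSum_odd_mul hN]
  rw [two_pow_succ_mul_probNum_succ, show n + 2 = (2 * k + 1) * N + 1 by omega,
    sum_range_mul_add_one_eq_sum_multiples hN _ _ hvanish, mul_sum]
  refine sum_congr rfl fun s _ => ?_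
  rw [hmultiple]
  push_cast
  field_simp

/-- For `ℓ = (2k+1)N`:
`2^ℓ p_ℓ^{(N)} = ∑_{s=1}^{2k} (-1)^{k-s} A(ℓ-1, sN) + 2(-1)^k`. -/
theorem two_pow_mul_probNum_odd_multiple (N k : ℕ) (hN : 2 ≤ N) :
    (2 : ℝ) ^ ((2 * k + 1) * N) * probNum N ((2 * k + 1) * N) =
      (∑ s ∈ Finset.Icc 1 (2 * k),
        (-1 : ℝ) ^ ((k : ℤ) - (s : ℤ)) * (catA ((2 * k + 1) * N - 1) ((s : ℤ) * N) : ℝ)) +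
        2 * (-1 : ℝ) ^ k := by
  obtain ⟨n, hn⟩ := Nat.exists_eq_add_one.mpr (Nat.mul_pos (2 * k).succ_pos (by omega : 0 < N))
  have htop : (-1 : ℝ) ^ ((k : ℤ) - (2 * k + 1 : ℕ)) * (catA n ((2 * k + 1 : ℕ) * N) : ℝ) =
      (-1) ^ k := by
    rw [show ((2 * k + 1 : ℕ) : ℤ) * N = n + 1 by exact_mod_cast hn, catA.natCast_add_one_self,
      show (k : ℤ) - (2 * k + 1 : ℕ) = -(k + 1 : ℕ) by push_cast; ring, zpow_neg, zpow_natCast]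
    simp [pow_succ, ← inv_pow]
  rw [hn, Nat.add_sub_cancel, two_pow_succ_mul_probNum_succ_eq_sum_multiples (by omega) hn,
    sum_range_add_two_eq, htop]
  simp only [CharP.cast_eq_zero, sub_zero, zpow_natCast, zero_mul, catA.zero_right, Int.cast_one,
    mul_one]
  ring
end

section
/- Let N ≥ 2 be an integer. For every integer k with 0 ≤ k ≤ N−1, 2^{N+2k−1} · p_{N+2k}^{(N)} = Σ ∏_{i=1}^{N} C_{j_i}, where the sum extends over all N-tuples (j_1,…,j_N) of nonnegative integers with j_1 + ⋯ + j_N = k and C_m = binom(2m,m)/(m+1) is the m-th Catalan number. In other words, the first N nonzero terms of the sequence q_ℓ^{(N)} = 2^{ℓ−1} p_ℓ^{(N)} agree with the first N terms of the N-th convolution power of the Catalan sequence. -/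
open Real Finset PowerSeries

theorem sin_mul_two_cos_pow (θ : ℝ) (m : ℕ) :
    sin θ * (2 * cos θ) ^ m =
      ∑ r ∈ range (m + 1), m.choose r * sin ((m + 1 - 2 * r) * θ) := by
  have hcos : ((2 * cos θ : ℝ) : ℂ) =
      Complex.exp (-θ * Complex.I) + Complex.exp (θ * Complex.I) := by
    push_cast
    rw [Complex.two_cos, add_comm]
  have hterm (r : ℕ) (hr : r ≤ m) :
      Complex.exp (θ * Complex.I) * Complex.exp (-θ * Complex.I) ^ r *
          Complex.exp (θ * Complex.I) ^ (m - r) =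
        Complex.exp (((m + 1 - 2 * r) * θ : ℝ) * Complex.I) := by
    rw [← Complex.exp_nat_mul, ← Complex.exp_nat_mul, ← Complex.exp_add, ← Complex.exp_add]
    congr 1
    push_cast [Nat.cast_sub hr]
    ring
  rw [← Complex.exp_ofReal_mul_I_im θ, ← Complex.im_mul_ofReal, Complex.ofReal_pow, hcos,
    add_pow, mul_sum, Complex.im_sum]
  refine sum_congr rfl fun r hr => ?_
  rw [← mul_assoc, ← mul_assoc, hterm r (Nat.lt_succ_iff.mp (mem_range.mp hr)),
    ← Complex.ofReal_natCast, Complex.im_mul_ofReal, Complex.exp_ofReal_mul_I_im, mul_comm]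

theorem two_cos_mul_sum_alternating_sin (n : ℕ) (φ : ℝ) :
    2 * cos φ * ∑ j ∈ range n, (-1) ^ j * sin ((2 * j + 1) * φ) =
      -((-1) ^ n * sin (2 * n * φ)) := by
  have hterm (j : ℕ) : 2 * cos φ * ((-1) ^ j * sin ((2 * j + 1) * φ)) =
      -((-1) ^ (j + 1) * sin (2 * (j + 1 : ℕ) * φ) - (-1) ^ j * sin (2 * j * φ)) := by
    have h := two_mul_sin_mul_cos ((2 * j + 1) * φ) φ
    rw [show (2 * j + 1) * φ - φ = 2 * j * φ by ring,
      show (2 * j + 1) * φ + φ = 2 * (j + 1 : ℕ) * φ by push_cast; ring] at h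
    linear_combination (-1) ^ j * h
  rw [mul_sum]
  simp_rw [hterm]
  rw [sum_neg_distrib, sum_range_sub (fun j => (-1 : ℝ) ^ j * sin (2 * j * φ))]
  simp

theorem sum_alternating_sin_eq_zero {n : ℕ} {φ : ℝ} (hcos : cos φ ≠ 0)
    (hsin : sin (2 * n * φ) = 0) : ∑ j ∈ range n, (-1) ^ j * sin ((2 * j + 1) * φ) = 0 := by
  have h := two_cos_mul_sum_alternating_sin n φ
  rw [hsin, mul_zero, neg_zero] at h
  simpa [hcos] using h

theorem sum_alternating_sin_mul_pi_div_two (n : ℕ) :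
    ∑ j ∈ range n, (-1) ^ j * sin ((2 * j + 1) * (π / 2)) = n := by
  have hsin (j : ℕ) : sin ((2 * j + 1) * (π / 2)) = (-1) ^ j := by
    rw [← cos_nat_mul_pi, ← sin_add_pi_div_two]
    ring_nf
  simp [hsin, ← pow_add, ← two_mul, pow_mul]

theorem cos_sub_two_mul_mul_pi_div_ne_zero {N k m r : ℕ} (hk : k < N)
    (hm : m + 1 = N + 2 * k) (hr : r ≤ m) (hrk : r ≠ k) (hrkN : r ≠ k + N) :
    cos ((m + 1 - 2 * r) * π / (2 * N)) ≠ 0 := by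
  have hN : (N : ℝ) ≠ 0 := Nat.cast_ne_zero.mpr (by omega)
  rw [Ne, cos_eq_zero_iff]
  rintro ⟨s, hs⟩
  have hs' : ((m + 1 - 2 * r : ℤ) : ℝ) = ((N * (2 * s + 1) : ℤ) : ℝ) := by
    field_simp at hs
    push_cast
    nlinarith [pi_pos]
  have hodd := Int.cast_injective hs'
  rcases (by omega : s ≤ -2 ∨ s = -1 ∨ s = 0 ∨ 1 ≤ s) with h | rfl | rfl | h
  · nlinarith
  · omega
  · omega
  · nlinarith

theorem sum_alternating_sin_mul_two_cos_pow {N k m : ℕ} (hk : k < N) (hm : m + 1 = N + 2 * k) :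
    ∑ j ∈ range N, (-1) ^ j * sin ((2 * j + 1) * π / (2 * N)) *
        (2 * cos ((2 * j + 1) * π / (2 * N))) ^ m =
      N * (m.choose k - m.choose (k + N)) := by
  have hN : (N : ℝ) ≠ 0 := Nat.cast_ne_zero.mpr (by omega)
  set φ : ℕ → ℝ := fun r => (m + 1 - 2 * r) * π / (2 * N) with hφ
  have hmR : (m : ℝ) + 1 = N + 2 * k := by exact_mod_cast hm
  have hφk : φ k = π / 2 := by
    simp only [hφ]
    field_simp
    linear_combination hmR
  have hφkN : φ (k + N) = -(π / 2) := by
    simp only [hφ]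
    push_cast
    field_simp
    linear_combination hmR
  have hsin (r : ℕ) : sin (2 * N * φ r) = 0 := by
    have : 2 * N * φ r = ((m + 1 - 2 * r : ℤ) : ℝ) * π := by
      simp only [hφ]
      push_cast
      field_simp
    rw [this, sin_int_mul_pi]
  calc ∑ j ∈ range N, (-1) ^ j * sin ((2 * j + 1) * π / (2 * N)) *
        (2 * cos ((2 * j + 1) * π / (2 * N))) ^ m
      = ∑ r ∈ range (m + 1),
          m.choose r * ∑ j ∈ range N, (-1) ^ j * sin ((2 * j + 1) * φ r) := by
        simp_rw [mul_assoc, sin_mul_two_cos_pow, mul_sum]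
        rw [sum_comm]
        refine sum_congr rfl fun r _ => sum_congr rfl fun j _ => ?_
        simp only [hφ]
        ring_nf
    _ = m.choose k * N + m.choose (k + N) * -N := by
        rw [sum_eq_add k (k + N) (by omega)]
        · rw [hφk, hφkN]
          simp_rw [mul_neg, sin_neg, mul_neg, sum_neg_distrib, sum_alternating_sin_mul_pi_div_two]
          ring
        · intro r hr ⟨hrk, hrkN⟩
          rw [sum_alternating_sin_eq_zero (cos_sub_two_mul_mul_pi_div_ne_zero hk hm
            (Nat.lt_succ_iff.mp (mem_range.mp hr)) hrk hrkN) (hsin r), mul_zero]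
        · intro hkm
          exact absurd (mem_range.mpr (by omega)) hkm
        · intro hkm
          rw [Nat.choose_eq_zero_of_lt (by simpa [Nat.lt_succ_iff] using hkm), Nat.cast_zero,
            zero_mul]
    _ = N * (m.choose k - m.choose (k + N)) := by ring

theorem two_pow_mul_probNum_eq_choose_sub_choose {N k : ℕ} (hk : k < N) :
    (2 : ℝ) ^ (N + 2 * k - 1) * probNum N (N + 2 * k) =
      (N + 2 * k - 1).choose k - (N + 2 * k - 1).choose (k + N) := by
  have hN : (N : ℝ) ≠ 0 := Nat.cast_ne_zero.mpr (by omega)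
  rw [probNum, if_neg (by omega), mul_left_comm, mul_sum]
  calc 1 / (N : ℝ) * ∑ j ∈ range N, 2 ^ (N + 2 * k - 1) * ((-1) ^ j *
        sin ((2 * j + 1) * π / (2 * N)) * cos ((2 * j + 1) * π / (2 * N)) ^ (N + 2 * k - 1))
      = 1 / N * ∑ j ∈ range N, (-1) ^ j * sin ((2 * j + 1) * π / (2 * N)) *
          (2 * cos ((2 * j + 1) * π / (2 * N))) ^ (N + 2 * k - 1) := by
        refine congrArg _ (sum_congr rfl fun j _ => ?_)
        ring
    _ = _ := by
        rw [sum_alternating_sin_mul_two_cos_pow hk (Nat.sub_add_cancel (by omega))]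
        field_simp

theorem catalanSeries_pow_succ (N : ℕ) :
    catalanSeries ^ (N + 1) = catalanSeries ^ N + X * catalanSeries ^ (N + 2) :=
  calc catalanSeries ^ (N + 1) = catalanSeries ^ N * (catalanSeries ^ 2 * X + 1) := by
        rw [catalanSeries_sq_mul_X_add_one, pow_succ]
    _ = catalanSeries ^ N + X * catalanSeries ^ (N + 2) := by ring

theorem coeff_succ_catalanSeries_pow_succ (N k : ℕ) :
    coeff (k + 1) (catalanSeries ^ (N + 1)) =
      coeff (k + 1) (catalanSeries ^ N) + coeff k (catalanSeries ^ (N + 2)) := by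
  rw [catalanSeries_pow_succ, map_add, coeff_succ_X_mul]

theorem coeff_catalanSeries_pow (N k : ℕ) :
    coeff k (catalanSeries ^ N) = ∑ j ∈ Nat.antidiagonalTuple N k, ∏ i, catalan (j i) := by
  classical
  have h := coeff_prod (fun _ : Fin N => catalanSeries) k univ
  rw [prod_const, card_univ, Fintype.card_fin] at h
  rw [h]
  refine sum_equiv Finsupp.equivFunOnFinite (fun l => ?_) fun l _ => ?_
  · simp [Nat.mem_antidiagonalTuple]
  · simp [catalanSeries_coeff]

theorem coeff_catalanSeries_pow_succ_add_choose (k N : ℕ) :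
    coeff k (catalanSeries ^ (N + 1)) + (N + 2 * k).choose (N + k + 1) =
      (N + 2 * k).choose k := by
  induction k generalizing N with
  | zero => simp [coeff_zero_eq_constantCoeff, catalanSeries_constantCoeff]
  | succ k ihk =>
    rw [coeff_succ_catalanSeries_pow_succ]
    induction N with
    | zero =>
      have h := ihk 1
      have p1 := Nat.choose_succ_succ' (2 * k + 1) (k + 1)
      have p2 := Nat.choose_succ_succ' (2 * k + 1) k
      rw [pow_zero, coeff_one, if_neg k.succ_ne_zero]
      ring_nf at h p1 p2 ⊢
      omega
    | succ N ihN =>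
      have h := ihk (N + 2)
      have p1 := Nat.choose_succ_succ' (N + 2 * k + 2) (N + k + 2)
      have p2 := Nat.choose_succ_succ' (N + 2 * k + 2) k
      rw [← coeff_succ_catalanSeries_pow_succ] at ihN
      ring_nf at h p1 p2 ihN ⊢
      omega

/-- For `0 ≤ k ≤ N-1`, `2^{N+2k-1} p_{N+2k}^{(N)}` equals the `k`-th term of the
`N`-th convolution power of the Catalan sequence. -/
theorem two_pow_mul_probNum_eq_catalan_convolution (N k : ℕ) (hN : 2 ≤ N)
    (hk : k ≤ N - 1) :
    (2 : ℝ) ^ (N + 2 * k - 1) * probNum N (N + 2 * k) =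
      ∑ j ∈ Finset.Nat.antidiagonalTuple N k, ∏ i : Fin N, (catalan (j i) : ℝ) := by
  obtain ⟨M, rfl⟩ : ∃ M, N = M + 1 := ⟨N - 1, by omega⟩
  have hballot := coeff_catalanSeries_pow_succ_add_choose k M
  rw [coeff_catalanSeries_pow] at hballot
  rw [two_pow_mul_probNum_eq_choose_sub_choose (by omega),
    show M + 1 + 2 * k - 1 = M + 2 * k by omega, show k + (M + 1) = M + k + 1 by ring, ← hballot]
  push_cast
  ring
end

section
/- For N = 4, the probability numbers are: p_ℓ^{(4)} = 0 when ℓ is odd or ℓ ∈ {0, 2}, and for every integer m ≥ 2, p_{2m}^{(4)} = √2 · [ (2 + √2)^{m−1} − (2 − √2)^{m−1} ] / 2^{2m+1}. -/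
open Real Finset

lemma neg_one_pow_reflect {N k : ℕ} (hN : Even N) (hk : k < N) :
    (-1 : ℝ) ^ (N - 1 - k) = -(-1) ^ k := by
  have hodd : Odd (N - 1) := by
    obtain ⟨n, rfl⟩ := hN
    exact ⟨n - 1, by omega⟩
  have h : (-1 : ℝ) ^ (N - 1 - k) * (-1) ^ k = -1 := by
    rw [← pow_add, Nat.sub_add_cancel (by omega), hodd.neg_one_pow]
  calc (-1 : ℝ) ^ (N - 1 - k) = (-1) ^ (N - 1 - k) * ((-1) ^ k * (-1) ^ k) := by
        rw [← pow_add, ← two_mul, pow_mul]; norm_num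
    _ = -(-1) ^ k := by rw [← mul_assoc, h, neg_one_mul]

lemma chebyshev_node_angle_reflect {N k : ℕ} (hk : k < N) :
    (2 * ((N - 1 - k : ℕ) : ℝ) + 1) * π / (2 * N) = π - (2 * k + 1) * π / (2 * N) := by
  have hN : (N : ℝ) ≠ 0 := by exact_mod_cast (show N ≠ 0 by omega)
  rw [Nat.cast_sub (by omega), Nat.cast_sub (by omega)]
  field_simp
  ring

theorem probNum_eq_zero_of_even_of_odd {N ℓ : ℕ} (hN : Even N) (hℓ : Odd ℓ) :
    probNum N ℓ = 0 := by
  obtain ⟨j, rfl⟩ := hℓ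
  set f : ℕ → ℝ := fun k => (-1) ^ k * sin ((2 * k + 1) * π / (2 * N)) *
    cos ((2 * k + 1) * π / (2 * N)) ^ (2 * j) with hf
  have hreflect : ∀ k ∈ range N, f (N - 1 - k) = -f k := by
    intro k hk
    have hk : k < N := mem_range.mp hk
    simp only [hf]
    rw [chebyshev_node_angle_reflect hk, sin_pi_sub, cos_pi_sub, (even_two_mul j).neg_pow,
      neg_one_pow_reflect hN hk]
    ring
  have hsum : ∑ k ∈ range N, f k = 0 := by
    have h := sum_range_reflect f N
    rw [sum_congr rfl hreflect, sum_neg_distrib] at h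
    linarith
  rw [probNum, if_neg (by omega), Nat.add_sub_cancel, hsum, mul_zero]

lemma cos_sq_pi_div_eight : cos (π / 8) ^ 2 = (2 + √2) / 4 := by
  rw [cos_pi_div_eight, div_pow, sq_sqrt (by positivity)]
  norm_num

lemma sin_sq_pi_div_eight : sin (π / 8) ^ 2 = (2 - √2) / 4 := by
  rw [sin_pi_div_eight, div_pow,
    sq_sqrt (sub_nonneg.2 (sqrt_le_iff.2 ⟨by norm_num, by norm_num⟩))]
  norm_num

lemma sin_mul_cos_pi_div_eight : sin (π / 8) * cos (π / 8) = √2 / 4 := by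
  have h := sin_two_mul (π / 8)
  rw [show 2 * (π / 8) = π / 4 by ring, sin_pi_div_four] at h
  linarith

lemma probNum_four_two_mul_add_two (j : ℕ) :
    probNum 4 (2 * j + 2) =
      sin (π / 8) * cos (π / 8) * ((cos (π / 8) ^ 2) ^ j - (sin (π / 8) ^ 2) ^ j) / 2 := by
  have h3s : sin (3 * π / 8) = cos (π / 8) := by
    rw [← cos_pi_div_two_sub]; ring_nf
  have h3c : cos (3 * π / 8) = sin (π / 8) := by
    rw [← sin_pi_div_two_sub]; ring_nf
  have h5s : sin (5 * π / 8) = cos (π / 8) := by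
    rw [show 5 * π / 8 = π - 3 * π / 8 by ring, sin_pi_sub, h3s]
  have h5c : cos (5 * π / 8) = -sin (π / 8) := by
    rw [show 5 * π / 8 = π - 3 * π / 8 by ring, cos_pi_sub, h3c]
  have h7s : sin (7 * π / 8) = sin (π / 8) := by
    rw [show 7 * π / 8 = π - π / 8 by ring, sin_pi_sub]
  have h7c : cos (7 * π / 8) = -cos (π / 8) := by
    rw [show 7 * π / 8 = π - π / 8 by ring, cos_pi_sub]
  have hodd : Odd (2 * j + 1) := odd_two_mul_add_one j
  rw [probNum, if_neg (by omega), show 2 * j + 2 - 1 = 2 * j + 1 by omega]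
  simp only [sum_range_succ, range_zero, sum_empty]
  -- keep `sin (π / 8)`, `cos (π / 8)` symbolic instead of unfolding them to nested radicals
  norm_num [-sin_pi_div_eight, -cos_pi_div_eight]
  rw [h3s, h3c, h5s, h5c, h7s, h7c, hodd.neg_pow, hodd.neg_pow]
  ring

lemma probNum_four_two_mul (m : ℕ) :
    probNum 4 (2 * m) = √2 * ((2 + √2) ^ (m - 1) - (2 - √2) ^ (m - 1)) / 2 ^ (2 * m + 1) := by
  rcases m with _ | j
  · simp [probNum]
  rw [show 2 * (j + 1) = 2 * j + 2 by ring, probNum_four_two_mul_add_two,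
    sin_mul_cos_pi_div_eight, cos_sq_pi_div_eight, sin_sq_pi_div_eight, div_pow, div_pow,
    Nat.add_sub_cancel, show 2 * j + 2 + 1 = 2 * j + 3 by ring, pow_add, pow_mul]
  field_simp
  ring

/-- The probability numbers for `N = 4`: `p_ℓ^{(4)} = 0` for `ℓ` odd or `ℓ ∈ {0,2}`, and
`p_{2m}^{(4)} = √2 ((2+√2)^{m-1} - (2-√2)^{m-1}) / 2^{2m+1}` for `m ≥ 2`. -/
theorem probNum_four :
    (∀ ℓ : ℕ, (Odd ℓ ∨ ℓ = 0 ∨ ℓ = 2) → probNum 4 ℓ = 0) ∧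
    (∀ m : ℕ, 2 ≤ m → probNum 4 (2 * m) =
      Real.sqrt 2 * ((2 + Real.sqrt 2) ^ (m - 1) - (2 - Real.sqrt 2) ^ (m - 1)) /
        2 ^ (2 * m + 1)) := by
  refine ⟨?_, fun m _ => probNum_four_two_mul m⟩
  rintro ℓ (hodd | rfl | rfl)
  · exact probNum_eq_zero_of_even_of_odd (by decide) hodd
  · simp [probNum]
  · simpa using probNum_four_two_mul 1
end
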